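/- Let E_M be a vector in ℝ^d and let E_{Q1}, E_{Q2} be nonzero vectors in ℝ^d with cos(E_{Q1}, E_{Q2}) = 1 − ε for some ε > 0 and with equal norms ‖E_{Q1}‖ = ‖E_{Q2}‖. Then |P(M,Q1) − P(M,Q2)| ≤ (1/4)·√(2ε)·‖E_M‖. -/

import Mathlib

/-- Ability score: `Θ(M,Q) = (E_Q ⋅ E_M)/‖E_Q‖`. -/
noncomputable def ability {d : ℕ} (EM EQ : EuclideanSpace ℝ (Fin d)) : ℝ :=
  (inner ℝ EQ EM : ℝ) / ‖EQ‖

/-- The logistic sigmoid `σ(t) = 1/(1 + e^{-t})`. -/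
noncomputable def sigmoid (t : ℝ) : ℝ := 1 / (1 + Real.exp (-t))

/-- Predicted correctness probability `P(M,Q) = σ(Θ(M,Q) - ‖E_Q‖)`. -/
noncomputable def predProb {d : ℕ} (EM EQ : EuclideanSpace ℝ (Fin d)) : ℝ :=
  sigmoid (ability EM EQ - ‖EQ‖)

/-- Cosine similarity `cos(u,v) = (u ⋅ v)/(‖u‖‖v‖)`. -/
noncomputable def cosSim {d : ℕ} (u v : EuclideanSpace ℝ (Fin d)) : ℝ :=
  (inner ℝ u v : ℝ) / (‖u‖ * ‖v‖)

/-!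
The logistic function is `1/4`-Lipschitz, since `σ' = σ (1 - σ) ≤ 1/4`. When `‖E_Q1‖ = ‖E_Q2‖ = r`
the difficulty offsets cancel, so the arguments of `σ` differ by `⟪E_Q1 - E_Q2, E_M⟫ / r`,
which Cauchy–Schwarz bounds by `‖E_Q1 - E_Q2‖ ‖E_M‖ / r`; finally
`‖E_Q1 - E_Q2‖² = 2 (1 - cos) r² = 2 ε r²`.
-/

lemma sigmoid_eq_real_sigmoid : sigmoid = Real.sigmoid :=
  funext fun _ => one_div _

lemma mul_one_sub_le_inv_four (p : ℝ) : p * (1 - p) ≤ 4⁻¹ := by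
  nlinarith [sq_nonneg (2 * p - 1)]

lemma Real.lipschitzWith_sigmoid : LipschitzWith 4⁻¹ Real.sigmoid := by
  refine lipschitzWith_of_nnnorm_deriv_le differentiable_sigmoid fun x => ?_
  have hpos : 0 < Real.sigmoid x * (1 - Real.sigmoid x) :=
    mul_pos (Real.sigmoid_pos x) (sub_pos.2 (Real.sigmoid_lt_one x))
  rw [Real.deriv_sigmoid, ← NNReal.coe_le_coe, coe_nnnorm, Real.norm_eq_abs, abs_of_pos hpos]
  simpa using mul_one_sub_le_inv_four (Real.sigmoid x)

lemma abs_sigmoid_sub_le (a b : ℝ) : |sigmoid a - sigmoid b| ≤ 4⁻¹ * |a - b| := by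
  simpa [sigmoid_eq_real_sigmoid, Real.dist_eq] using Real.lipschitzWith_sigmoid.dist_le_mul a b

section

variable {d : ℕ} {u v : EuclideanSpace ℝ (Fin d)}

lemma norm_sub_sq_eq_of_norm_eq (hu : u ≠ 0) (huv : ‖u‖ = ‖v‖) :
    ‖u - v‖ ^ 2 = 2 * (1 - cosSim u v) * ‖u‖ ^ 2 := by
  have hr : ‖u‖ ≠ 0 := norm_ne_zero_iff.2 hu
  rw [norm_sub_sq_real, cosSim, ← huv]
  field_simp
  ring

lemma norm_sub_eq_of_norm_eq (hu : u ≠ 0) (huv : ‖u‖ = ‖v‖) :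
    ‖u - v‖ = √(2 * (1 - cosSim u v)) * ‖u‖ := by
  rw [← Real.sqrt_sq (norm_nonneg (u - v)), norm_sub_sq_eq_of_norm_eq hu huv,
    Real.sqrt_mul' _ (sq_nonneg _), Real.sqrt_sq (norm_nonneg u)]

lemma ability_sub_ability_of_norm_eq (EM : EuclideanSpace ℝ (Fin d)) (huv : ‖u‖ = ‖v‖) :
    ability EM u - ability EM v = inner ℝ (u - v) EM / ‖u‖ := by
  rw [ability, ability, ← huv, inner_sub_left, sub_div]

lemma abs_ability_sub_le_of_norm_eq (EM : EuclideanSpace ℝ (Fin d)) (huv : ‖u‖ = ‖v‖) :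
    |ability EM u - ability EM v| ≤ ‖u - v‖ * ‖EM‖ / ‖u‖ := by
  rw [ability_sub_ability_of_norm_eq EM huv, abs_div, abs_norm]
  exact div_le_div_of_nonneg_right (abs_real_inner_le_norm _ _) (norm_nonneg _)

lemma abs_predProb_sub_le_of_norm_eq (EM : EuclideanSpace ℝ (Fin d)) (huv : ‖u‖ = ‖v‖) :
    |predProb EM u - predProb EM v| ≤ 4⁻¹ * |ability EM u - ability EM v| := by
  simpa only [predProb, huv, sub_sub_sub_cancel_right] using
    abs_sigmoid_sub_le (ability EM u - ‖v‖) (ability EM v - ‖v‖)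

end

theorem predProb_stability_equal_norms_general {d : ℕ}
    (EM EQ1 EQ2 : EuclideanSpace ℝ (Fin d)) (hQ1 : EQ1 ≠ 0)
    (ε : ℝ) (hcos : cosSim EQ1 EQ2 = 1 - ε)
    (hnorm : ‖EQ1‖ = ‖EQ2‖) :
    |predProb EM EQ1 - predProb EM EQ2| ≤
      (1 / 4) * Real.sqrt (2 * ε) * ‖EM‖ := by
  have hdist : ‖EQ1 - EQ2‖ = √(2 * ε) * ‖EQ1‖ := by
    rw [norm_sub_eq_of_norm_eq hQ1 hnorm, hcos, sub_sub_cancel]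
  calc |predProb EM EQ1 - predProb EM EQ2|
      ≤ 4⁻¹ * |ability EM EQ1 - ability EM EQ2| := abs_predProb_sub_le_of_norm_eq EM hnorm
    _ ≤ 4⁻¹ * (‖EQ1 - EQ2‖ * ‖EM‖ / ‖EQ1‖) := by
        gcongr
        exact abs_ability_sub_le_of_norm_eq EM hnorm
    _ = 1 / 4 * √(2 * ε) * ‖EM‖ := by
        rw [hdist]
        field_simp [norm_ne_zero_iff.2 hQ1]

theorem predProb_stability_equal_norms {d : ℕ}
    (EM EQ1 EQ2 : EuclideanSpace ℝ (Fin d)) (hQ1 : EQ1 ≠ 0) (hQ2 : EQ2 ≠ 0)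
    (ε : ℝ) (hε : 0 < ε) (hcos : cosSim EQ1 EQ2 = 1 - ε)
    (hnorm : ‖EQ1‖ = ‖EQ2‖) :
    |predProb EM EQ1 - predProb EM EQ2| ≤
      (1 / 4) * Real.sqrt (2 * ε) * ‖EM‖ :=
  predProb_stability_equal_norms_general EM EQ1 EQ2 hQ1 ε hcos hnorm
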